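/- arXiv:1708.01545 — 2 statements merged into one kernel-verified Lean document; each statement's English description precedes it below -/
import Mathlib

section
/- Let A, D : X → X' be non-negative linear operators with square roots (R_A, H_A) and (R_D, H_D) respectively. Then A ≤ α²D for some α ∈ [0, ∞) if and only if there exists a bounded linear operator W : H_A → H_D with ‖W‖ ≤ α and R_A* = R_D* ∘ W. Moreover, there is a unique such W with range contained in the closure of ran R_D, and for this W one has ker W = ker R_A*. -/
open scoped ComplexOrder ComplexConjugate
open Complex

noncomputable section

/-- For a linear map `R : V → H` into a Hilbert space, `adjMap R : H → V'` is the
operator `R*`, sending `h` to the antilinear functional `v ↦ (h | R v)`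
(in Mathlib's convention, `v ↦ ⟪R v, h⟫`). -/
def adjMap {V H : Type*} [AddCommGroup V] [Module ℂ V]
    [NormedAddCommGroup H] [InnerProductSpace ℂ H] (R : V →ₗ[ℂ] H) :
    H →ₗ[ℂ] (V →ₗ⋆[ℂ] ℂ) where
  toFun h :=
    { toFun := fun v => @inner ℂ _ _ (R v) h
      map_add' := fun v w => by simp [inner_add_left]
      map_smul' := fun c v => by simp [inner_smul_left, mul_comm] }
  map_add' h₁ h₂ := by ext v; simp [inner_add_right]
  map_smul' c h := by ext v; simp [inner_smul_right]

/-- For `B : Y → X'`, the operator `B~ := B'↾X : X → Y'`, `(B~ x) y = conj (⟨B y, x⟩)`. -/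
def Btilde {X Y : Type*} [AddCommGroup X] [Module ℂ X] [AddCommGroup Y] [Module ℂ Y]
    (B : Y →ₗ[ℂ] (X →ₗ⋆[ℂ] ℂ)) : X →ₗ[ℂ] (Y →ₗ⋆[ℂ] ℂ) where
  toFun x :=
    { toFun := fun y => conj (B y x)
      map_add' := fun y₁ y₂ => by simp
      map_smul' := fun c y => by simp }
  map_add' x₁ x₂ := by ext y; simp
  map_smul' c x := by ext y; simp

/-!
`A ≤ α²D` says `‖R_A x‖ ≤ α ‖R_D x‖`, so `R_D x ↦ R_A x` is a well-defined linear map of norm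
at most `α` on `ran R_D`. It extends to the closure `K` of `ran R_D`, and `W` is its Hilbert
adjoint followed by the inclusion of `K`. Conversely `‖R_A x‖² = (W R_A x | R_D x)` gives the
inequality back. Since `ker R_D* = (ran R_D)^⊥`, the map `R_D*` is injective on `K`, which gives
both the uniqueness of `W` and `ker W = ker R_A*`.
-/

open scoped InnerProductSpace InnerProduct

namespace LinearMap

variable {R M N : Type*} [Ring R] [AddCommGroup M] [Module R M] [AddCommGroup N] [Module R N]
  [TopologicalSpace N] [IsTopologicalAddGroup N] [ContinuousConstSMul R N]

lemma coe_topologicalClosure_range (f : M →ₗ[R] N) :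
    ((range f).topologicalClosure : Set N) = closure (Set.range f) := by
  rw [Submodule.topologicalClosure_coe, coe_range]

lemma denseRange_codRestrict_topologicalClosure_range (f : M →ₗ[R] N) :
    DenseRange (f.codRestrict (range f).topologicalClosure
      fun x => Submodule.le_topologicalClosure _ (mem_range_self f x)) := by
  rw [DenseRange, dense_iff_closure_eq,
    Topology.IsInducing.subtypeVal.closure_eq_preimage_closure_image, ← Set.range_comp,
    Set.eq_univ_iff_forall]
  rintro ⟨k, hk⟩
  rw [coe_topologicalClosure_range] at hk
  exact hk

end LinearMap

section AdjMap

variable {X H HA HD : Type*} [AddCommGroup X] [Module ℂ X]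
  [NormedAddCommGroup H] [InnerProductSpace ℂ H]
  [NormedAddCommGroup HA] [InnerProductSpace ℂ HA]
  [NormedAddCommGroup HD] [InnerProductSpace ℂ HD]

lemma adjMap_apply (R : X →ₗ[ℂ] H) (h : H) (x : X) : adjMap R h x = ⟪R x, h⟫_ℂ := rfl

lemma adjMap_apply_self (R : X →ₗ[ℂ] H) (x : X) : adjMap R (R x) x = (‖R x‖ : ℂ) ^ 2 :=
  inner_self_eq_norm_sq_to_K _

lemma eq_zero_of_mem_closure_range_of_adjMap_eq_zero {R : X →ₗ[ℂ] H} {v : H}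
    (hv : v ∈ closure (Set.range R)) (h0 : adjMap R v = 0) : v = 0 := by
  rw [← LinearMap.coe_topologicalClosure_range, SetLike.mem_coe] at hv
  have hperp : v ∈ (LinearMap.range R).topologicalClosureᗮ := by
    rw [Submodule.orthogonal_closure]
    rintro _ ⟨x, rfl⟩
    exact LinearMap.congr_fun h0 x
  have hbot := Submodule.mem_inf.mpr ⟨hv, hperp⟩
  rwa [Submodule.inf_orthogonal_eq_bot, Submodule.mem_bot] at hbot

lemma adjMap_self_le_sq_mul_iff {RA : X →ₗ[ℂ] HA} {RD : X →ₗ[ℂ] HD} {α : ℝ} (hα : 0 ≤ α) :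
    (∀ x, adjMap RA (RA x) x ≤ (α : ℂ) ^ 2 * adjMap RD (RD x) x) ↔
      ∀ x, ‖RA x‖ ≤ α * ‖RD x‖ := by
  refine forall_congr' fun x => ?_
  rw [adjMap_apply_self, adjMap_apply_self, ← mul_pow]
  norm_cast
  exact pow_le_pow_iff_left₀ (norm_nonneg _) (by positivity) two_ne_zero

lemma norm_le_mul_norm_of_adjMap_eq_adjMap_comp {RA : X →ₗ[ℂ] HA} {RD : X →ₗ[ℂ] HD}
    {W : HA →L[ℂ] HD} {α : ℝ} (hW : ‖W‖ ≤ α) (hRW : ∀ h, adjMap RA h = adjMap RD (W h))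
    (x : X) : ‖RA x‖ ≤ α * ‖RD x‖ := by
  have hα : 0 ≤ α := (norm_nonneg W).trans hW
  have hsq : ‖RA x‖ ^ 2 ≤ α * ‖RD x‖ * ‖RA x‖ :=
    calc ‖RA x‖ ^ 2 = ‖adjMap RD (W (RA x)) x‖ := by
          rw [← hRW, adjMap_apply_self]; norm_cast; simp
      _ ≤ ‖RD x‖ * ‖W (RA x)‖ := norm_inner_le_norm _ _
      _ ≤ ‖RD x‖ * (α * ‖RA x‖) := by gcongr; exact W.le_of_opNorm_le hW _
      _ = α * ‖RD x‖ * ‖RA x‖ := by ring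
  nlinarith [norm_nonneg (RA x), mul_nonneg hα (norm_nonneg (RD x))]

lemma eq_of_adjMap_apply_eq {RD : X →ₗ[ℂ] HD} {W W' : HA →L[ℂ] HD}
    (hW : ∀ h, adjMap RD (W h) = adjMap RD (W' h))
    (hr : Set.range W ⊆ closure (Set.range RD)) (hr' : Set.range W' ⊆ closure (Set.range RD)) :
    W = W' := by
  ext h
  refine sub_eq_zero.mp (eq_zero_of_mem_closure_range_of_adjMap_eq_zero (R := RD) ?_ ?_)
  · rw [← LinearMap.coe_topologicalClosure_range] at hr hr' ⊢
    exact Submodule.sub_mem _ (hr ⟨h, rfl⟩) (hr' ⟨h, rfl⟩)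
  · rw [map_sub, hW, sub_self]

lemma apply_eq_zero_iff_adjMap_eq_zero {RA : X →ₗ[ℂ] HA} {RD : X →ₗ[ℂ] HD} {W : HA →L[ℂ] HD}
    (hRW : ∀ h, adjMap RA h = adjMap RD (W h)) (hr : Set.range W ⊆ closure (Set.range RD))
    (h : HA) : W h = 0 ↔ adjMap RA h = 0 := by
  refine ⟨fun h0 => by rw [hRW, h0, map_zero], fun h0 => ?_⟩
  exact eq_zero_of_mem_closure_range_of_adjMap_eq_zero (hr ⟨h, rfl⟩) (hRW h ▸ h0)

theorem exists_adjMap_eq_adjMap_comp [CompleteSpace HA] [CompleteSpace HD]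
    {RA : X →ₗ[ℂ] HA} {RD : X →ₗ[ℂ] HD} {α : ℝ} (hα : 0 ≤ α)
    (hle : ∀ x, ‖RA x‖ ≤ α * ‖RD x‖) :
    ∃ W : HA →L[ℂ] HD, ‖W‖ ≤ α ∧ (∀ h, adjMap RA h = adjMap RD (W h)) ∧
      Set.range W ⊆ closure (Set.range RD) := by
  set K := (LinearMap.range RD).topologicalClosure
  let e : X →ₗ[ℂ] K := RD.codRestrict K
    fun x => Submodule.le_topologicalClosure _ (LinearMap.mem_range_self RD x)
  have he : DenseRange e := RD.denseRange_codRestrict_topologicalClosure_range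
  let C : K →L[ℂ] HA := RA.extendOfNorm e
  have hCe : ∀ x, C (e x) = RA x := LinearMap.extendOfNorm_eq he ⟨α, hle⟩
  have hC : ‖C‖ ≤ α := LinearMap.opNorm_extendOfNorm_le he hα hle
  refine ⟨K.subtypeₗᵢ.toContinuousLinearMap.comp (C†), ?_, fun h => ?_, ?_⟩
  · rwa [LinearIsometry.norm_toContinuousLinearMap_comp, LinearIsometryEquiv.norm_map]
  · ext x
    rw [adjMap_apply, ← hCe, ← ContinuousLinearMap.adjoint_inner_right]
    rfl
  · rintro _ ⟨h, rfl⟩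
    rw [← LinearMap.coe_topologicalClosure_range]
    exact ((C†) h).2

end AdjMap

theorem schur_stmt3_general {X HA HD : Type} [AddCommGroup X] [Module ℂ X]
    [NormedAddCommGroup HA] [InnerProductSpace ℂ HA] [CompleteSpace HA]
    [NormedAddCommGroup HD] [InnerProductSpace ℂ HD] [CompleteSpace HD]
    (A D : X →ₗ[ℂ] (X →ₗ⋆[ℂ] ℂ))
    (RA : X →ₗ[ℂ] HA) (RD : X →ₗ[ℂ] HD)
    (hRA : ∀ x, A x = adjMap RA (RA x)) (hRD : ∀ x, D x = adjMap RD (RD x))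
    (α : ℝ) (hα : 0 ≤ α) :
    ((∀ x, A x x ≤ (α : ℂ) ^ 2 * D x x) ↔
        ∃ W : HA →L[ℂ] HD, ‖W‖ ≤ α ∧ ∀ h, adjMap RA h = adjMap RD (W h)) ∧
      ((∀ x, A x x ≤ (α : ℂ) ^ 2 * D x x) →
        (∃! W : HA →L[ℂ] HD, ‖W‖ ≤ α ∧ (∀ h, adjMap RA h = adjMap RD (W h)) ∧
            Set.range W ⊆ closure (Set.range RD)) ∧
          ∀ W : HA →L[ℂ] HD,
            (‖W‖ ≤ α ∧ (∀ h, adjMap RA h = adjMap RD (W h)) ∧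
              Set.range W ⊆ closure (Set.range RD)) →
            ∀ h, W h = 0 ↔ adjMap RA h = 0) := by
  have hcomp : (∀ x, A x x ≤ (α : ℂ) ^ 2 * D x x) ↔ ∀ x, ‖RA x‖ ≤ α * ‖RD x‖ := by
    simp only [hRA, hRD]
    exact adjMap_self_le_sq_mul_iff hα
  rw [hcomp]
  refine ⟨⟨fun hle => ?_, ?_⟩, fun hle => ⟨?_, ?_⟩⟩
  · obtain ⟨W, hW, hRW, -⟩ := exists_adjMap_eq_adjMap_comp hα hle
    exact ⟨W, hW, hRW⟩
  · rintro ⟨W, hW, hRW⟩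
    exact norm_le_mul_norm_of_adjMap_eq_adjMap_comp hW hRW
  · obtain ⟨W, hW, hRW, hr⟩ := exists_adjMap_eq_adjMap_comp hα hle
    refine ⟨W, ⟨hW, hRW, hr⟩, ?_⟩
    rintro W' ⟨-, hRW', hr'⟩
    exact eq_of_adjMap_apply_eq (fun h => (hRW' h).symm.trans (hRW h)) hr' hr
  · rintro W ⟨-, hRW, hr⟩
    exact apply_eq_zero_iff_adjMap_eq_zero hRW hr

theorem schur_stmt3 {X HA HD : Type} [AddCommGroup X] [Module ℂ X]
    [NormedAddCommGroup HA] [InnerProductSpace ℂ HA] [CompleteSpace HA]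
    [NormedAddCommGroup HD] [InnerProductSpace ℂ HD] [CompleteSpace HD]
    (A D : X →ₗ[ℂ] (X →ₗ⋆[ℂ] ℂ))
    (RA : X →ₗ[ℂ] HA) (RD : X →ₗ[ℂ] HD)
    (hA : ∀ x, 0 ≤ A x x) (hD : ∀ x, 0 ≤ D x x)
    (hRA : ∀ x, A x = adjMap RA (RA x)) (hRD : ∀ x, D x = adjMap RD (RD x))
    (α : ℝ) (hα : 0 ≤ α) :
    ((∀ x, A x x ≤ (α : ℂ) ^ 2 * D x x) ↔
        ∃ W : HA →L[ℂ] HD, ‖W‖ ≤ α ∧ ∀ h, adjMap RA h = adjMap RD (W h)) ∧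
      ((∀ x, A x x ≤ (α : ℂ) ^ 2 * D x x) →
        (∃! W : HA →L[ℂ] HD, ‖W‖ ≤ α ∧ (∀ h, adjMap RA h = adjMap RD (W h)) ∧
            Set.range W ⊆ closure (Set.range RD)) ∧
          ∀ W : HA →L[ℂ] HD,
            (‖W‖ ≤ α ∧ (∀ h, adjMap RA h = adjMap RD (W h)) ∧
              Set.range W ⊆ closure (Set.range RD)) →
            ∀ h, W h = 0 ↔ adjMap RA h = 0) :=
  schur_stmt3_general A D RA RD hRA hRD α hα
end
end

section
/- If (R, H) is a square root of a non-negative operator A : X → X' and (S, G) is a minimal square root of A (i.e., ran S dense in G), then there exists an isometry U : G → H such that U ∘ S = R. -/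
open scoped ComplexOrder ComplexConjugate
open Complex

noncomputable section

namespace LinearMap

variable {𝕜 E F G : Type*} [NontriviallyNormedField 𝕜] [AddCommGroup E] [Module 𝕜 E]
  [NormedAddCommGroup F] [NormedSpace 𝕜 F] [CompleteSpace F]
  [SeminormedAddCommGroup G] [NormedSpace 𝕜 G]
  {f : E →ₗ[𝕜] F} {e : E →ₗ[𝕜] G}

theorem norm_extendOfNorm_apply_of_norm_eq (h_dense : DenseRange e)
    (h_norm : ∀ x, ‖f x‖ = ‖e x‖) (y : G) : ‖f.extendOfNorm e y‖ = ‖y‖ := by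
  refine h_dense.induction_on y (isClosed_eq (by fun_prop) continuous_norm) fun x => ?_
  rw [extendOfNorm_eq h_dense ⟨1, fun x => by rw [one_mul, h_norm]⟩, h_norm]

theorem exists_linearIsometry_comp_eq_of_norm_eq (h_dense : DenseRange e)
    (h_norm : ∀ x, ‖f x‖ = ‖e x‖) : ∃ U : G →ₗᵢ[𝕜] F, ∀ x, U (e x) = f x :=
  ⟨⟨(f.extendOfNorm e).toLinearMap, norm_extendOfNorm_apply_of_norm_eq h_dense h_norm⟩,
    extendOfNorm_eq h_dense ⟨1, fun x => by rw [one_mul, h_norm]⟩⟩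

end LinearMap

theorem adjMap_apply_apply {V H : Type*} [AddCommGroup V] [Module ℂ V]
    [NormedAddCommGroup H] [InnerProductSpace ℂ H] (R : V →ₗ[ℂ] H) (h : H) (v : V) :
    adjMap R h v = inner ℂ (R v) h :=
  rfl

theorem norm_eq_of_adjMap_self_eq {V H G : Type*} [AddCommGroup V] [Module ℂ V]
    [NormedAddCommGroup H] [InnerProductSpace ℂ H] [NormedAddCommGroup G] [InnerProductSpace ℂ G]
    {R : V →ₗ[ℂ] H} {S : V →ₗ[ℂ] G} (h : ∀ x, adjMap R (R x) = adjMap S (S x)) (x : V) :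
    ‖R x‖ = ‖S x‖ := by
  have h_inner : inner ℂ (R x) (R x) = inner ℂ (S x) (S x) := by
    simpa only [adjMap_apply_apply] using LinearMap.congr_fun (h x) x
  rw [inner_self_eq_norm_sq_to_K, inner_self_eq_norm_sq_to_K] at h_inner
  exact (sq_eq_sq₀ (norm_nonneg _) (norm_nonneg _)).mp (mod_cast h_inner)

theorem schur_stmt6_general {X H G : Type} [AddCommGroup X] [Module ℂ X]
    [NormedAddCommGroup H] [InnerProductSpace ℂ H] [CompleteSpace H]
    [NormedAddCommGroup G] [InnerProductSpace ℂ G]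
    (A : X →ₗ[ℂ] (X →ₗ⋆[ℂ] ℂ)) (R : X →ₗ[ℂ] H) (S : X →ₗ[ℂ] G)
    (hR : ∀ x, A x = adjMap R (R x)) (hS : ∀ x, A x = adjMap S (S x))
    (hmin : DenseRange S) :
    ∃ U : G →ₗᵢ[ℂ] H, ∀ x, U (S x) = R x :=
  R.exists_linearIsometry_comp_eq_of_norm_eq hmin
    (norm_eq_of_adjMap_self_eq fun x => (hR x).symm.trans (hS x))

theorem schur_stmt6 {X H G : Type} [AddCommGroup X] [Module ℂ X]
    [NormedAddCommGroup H] [InnerProductSpace ℂ H] [CompleteSpace H]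
    [NormedAddCommGroup G] [InnerProductSpace ℂ G] [CompleteSpace G]
    (A : X →ₗ[ℂ] (X →ₗ⋆[ℂ] ℂ)) (R : X →ₗ[ℂ] H) (S : X →ₗ[ℂ] G)
    (hA : ∀ x, 0 ≤ A x x)
    (hR : ∀ x, A x = adjMap R (R x)) (hS : ∀ x, A x = adjMap S (S x))
    (hmin : DenseRange S) :
    ∃ U : G →ₗᵢ[ℂ] H, ∀ x, U (S x) = R x :=
  schur_stmt6_general A R S hR hS hmin
end
end
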